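/- Let E be a finite-dimensional real inner product space, let g : E → ℝ be differentiable and strongly convex with constant μ > 0 (i.e., g(y) ≥ g(x) + ⟪∇g(x), y - x⟫ + μ‖y - x‖² for all x, y), let h : E → ℝ be convex and differentiable with ∇h Lipschitz continuous with constant L_h, and set f = g - h. Suppose f(x) ≥ f_low for all x ∈ E for some f_low ∈ ℝ. Let (x_k)_{k≥0} be DCA iterates, i.e., for every k, x_{k+1} is a global minimizer of x ↦ g(x) - ⟪∇h(x_k), x - x_k⟫. Then k · min_{0 ≤ i ≤ k} ‖∇f(x_i)‖² → 0 as k → ∞; in particular, for every ε > 0 there is an iterate x_k with ‖∇f(x_k)‖ ≤ ε, and the first such index is o(ε^{-2}). -/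

import Mathlib

/-!
The optimality condition of the DCA subproblem is `∇g x_{k+1} = ∇h x_k`. With it, strong convexity
of `g` and convexity of `h` give the sufficient decrease `μ ‖x_{k+1} - x_k‖² ≤ f x_k - f x_{k+1}`,
and `∇f x_{k+1} = ∇h x_k - ∇h x_{k+1}` has norm at most `L ‖x_{k+1} - x_k‖`. Telescoping against
`f_low` makes `∑ ‖∇f x_k‖²` finite. The running minimum `m_k` of a summable nonnegative sequence is
antitone and summable, so `k m_k ≤ 2 ∑_{j ≥ k/2} m_j → 0`.
-/

open RealInnerProductSpace Filter Topology

section Sequences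

open Finset

theorem summable_of_le_sub_succ {a F : ℕ → ℝ} {m : ℝ} (ha : ∀ k, 0 ≤ a k)
    (hle : ∀ k, a k ≤ F k - F (k + 1)) (hF : ∀ k, m ≤ F k) : Summable a :=
  summable_of_sum_range_le ha fun n => calc
    ∑ k ∈ range n, a k ≤ ∑ k ∈ range n, (F k - F (k + 1)) := sum_le_sum fun k _ => hle k
    _ = F 0 - F n := sum_range_sub' F n
    _ ≤ F 0 - m := by linarith [hF n]

theorem Antitone.tendsto_mul_of_summable {a : ℕ → ℝ} (hanti : Antitone a) (ha : ∀ k, 0 ≤ a k)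
    (hsum : Summable a) : Tendsto (fun n : ℕ => (n : ℝ) * a n) atTop (𝓝 0) := by
  have hbound : ∀ n : ℕ, (n : ℝ) * a n ≤ 2 * ∑' j, a (j + n / 2) := by
    intro n
    have hcard : (n : ℝ) ≤ 2 * ((n - n / 2 : ℕ) : ℝ) := by
      exact_mod_cast (by omega : n ≤ 2 * (n - n / 2))
    have hblock : ((n - n / 2 : ℕ) : ℝ) * a n ≤ ∑ j ∈ range (n - n / 2), a (j + n / 2) := by
      simpa using card_nsmul_le_sum (range (n - n / 2)) (fun j => a (j + n / 2)) (a n)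
        fun j hj => hanti (by rw [mem_range] at hj; omega)
    have htail : ∑ j ∈ range (n - n / 2), a (j + n / 2) ≤ ∑' j, a (j + n / 2) :=
      ((summable_nat_add_iff _).2 hsum).sum_le_tsum _ fun j _ => ha _
    nlinarith [ha n]
  have htail : Tendsto (fun n : ℕ => 2 * ∑' j, a (j + n / 2)) atTop (𝓝 0) := by
    simpa using ((tendsto_sum_nat_add a).comp (Nat.tendsto_div_const_atTop two_ne_zero)).const_mul 2
  exact squeeze_zero (fun n => mul_nonneg n.cast_nonneg (ha n)) hbound htail

theorem tendsto_mul_inf'_Icc_of_summable {a : ℕ → ℝ} (ha : ∀ k, 0 ≤ a k) (hsum : Summable a) :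
    Tendsto (fun k : ℕ => (k : ℝ) * (Icc 0 k).inf' (nonempty_Icc.2 (Nat.zero_le k)) a)
      atTop (𝓝 0) := by
  set m := fun k : ℕ => (Icc 0 k).inf' (nonempty_Icc.2 (Nat.zero_le k)) a
  have hm0 : ∀ k, 0 ≤ m k := fun k => le_inf' _ _ fun i _ => ha i
  have hanti : Antitone m := fun k l hkl => inf'_mono _ (Icc_subset_Icc_right hkl) _
  have hle : ∀ k, m k ≤ a k := fun k => inf'_le _ (right_mem_Icc.2 (Nat.zero_le k))
  exact hanti.tendsto_mul_of_summable hm0 (hsum.of_nonneg_of_le hm0 hle)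

end Sequences

section

variable {E : Type*} [NormedAddCommGroup E] [InnerProductSpace ℝ E] [CompleteSpace E]

theorem HasGradientAt.sub {f g : E → ℝ} {f' g' x : E} (hf : HasGradientAt f f' x)
    (hg : HasGradientAt g g' x) : HasGradientAt (fun y => f y - g y) (f' - g') x := by
  rw [hasGradientAt_iff_hasFDerivAt, map_sub]
  exact hf.hasFDerivAt.sub hg.hasFDerivAt

theorem hasGradientAt_inner_sub_const (c a x : E) :
    HasGradientAt (fun y => ⟪c, y - a⟫) c x := by
  rw [hasGradientAt_iff_hasFDerivAt]
  have hfun : (fun y => ⟪c, y - a⟫) = fun y => InnerProductSpace.toDual ℝ E c y - ⟪c, a⟫ :=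
    funext fun y => inner_sub_right c y a
  rw [hfun]
  exact (InnerProductSpace.toDual ℝ E c).hasFDerivAt.sub_const _

theorem IsLocalMin.hasGradientAt_eq_zero {f : E → ℝ} {f' x : E} (hmin : IsLocalMin f x)
    (hf : HasGradientAt f f' x) : f' = 0 := by
  simpa using hmin.hasFDerivAt_eq_zero hf.hasFDerivAt

theorem ConvexOn.add_inner_gradient_le {h : E → ℝ} (hconv : ConvexOn ℝ Set.univ h) {x : E}
    (hx : DifferentiableAt ℝ h x) (y : E) : h x + ⟪gradient h x, y - x⟫ ≤ h y := by
  have hline : HasDerivAt (h ∘ (AffineMap.lineMap x y : ℝ →ᵃ[ℝ] E)) ⟪gradient h x, y - x⟫ 0 := by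
    have hx' : HasFDerivAt h (InnerProductSpace.toDual ℝ E (gradient h x))
        (AffineMap.lineMap (k := ℝ) x y 0) := by
      rw [AffineMap.lineMap_apply_zero]; exact hx.hasGradientAt.hasFDerivAt
    simpa using hx'.comp_hasDerivAt (0 : ℝ) AffineMap.hasDerivAt_lineMap
  have hslope := (hconv.comp_affineMap (AffineMap.lineMap x y)).le_slope_of_hasDerivAt
    (Set.mem_univ 0) (Set.mem_univ 1) one_pos hline
  simp only [slope_def_field, Function.comp_apply, AffineMap.lineMap_apply_one,
    AffineMap.lineMap_apply_zero, sub_zero, div_one] at hslope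
  linarith

def IsDCASequence (g h : E → ℝ) (x : ℕ → E) : Prop :=
  ∀ k y, g (x (k + 1)) - ⟪gradient h (x k), x (k + 1) - x k⟫ ≤ g y - ⟪gradient h (x k), y - x k⟫

namespace IsDCASequence

variable {g h : E → ℝ} {x : ℕ → E}

theorem gradient_succ (hx : IsDCASequence g h x) (hg : Differentiable ℝ g) (k : ℕ) :
    gradient g (x (k + 1)) = gradient h (x k) := by
  have hmin : IsLocalMin (fun y => g y - ⟪gradient h (x k), y - x k⟫) (x (k + 1)) :=
    Eventually.of_forall (hx k)
  exact sub_eq_zero.1 <| hmin.hasGradientAt_eq_zero <|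
    (hg _).hasGradientAt.sub (hasGradientAt_inner_sub_const _ _ _)

theorem mul_sq_norm_succ_sub_le {μ : ℝ} (hx : IsDCASequence g h x) (hg : Differentiable ℝ g)
    (hsc : ∀ u v : E, g v ≥ g u + ⟪gradient g u, v - u⟫ + μ * ‖v - u‖ ^ 2)
    (hh : Differentiable ℝ h) (hconv : ConvexOn ℝ Set.univ h) (k : ℕ) :
    μ * ‖x (k + 1) - x k‖ ^ 2 ≤ (g (x k) - h (x k)) - (g (x (k + 1)) - h (x (k + 1))) := by
  have hg_step := hsc (x (k + 1)) (x k)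
  rw [hx.gradient_succ hg k, norm_sub_rev] at hg_step
  have hh_step := hconv.add_inner_gradient_le (hh (x k)) (x (k + 1))
  have hflip : ⟪gradient h (x k), x k - x (k + 1)⟫ = -⟪gradient h (x k), x (k + 1) - x k⟫ := by
    rw [← inner_neg_right, neg_sub]
  linarith

theorem norm_gradient_succ_le {L : ℝ} (hx : IsDCASequence g h x) (hg : Differentiable ℝ g)
    (hh : Differentiable ℝ h) (hlip : ∀ u v : E, ‖gradient h u - gradient h v‖ ≤ L * ‖u - v‖)
    (k : ℕ) : ‖gradient (fun y => g y - h y) (x (k + 1))‖ ≤ L * ‖x (k + 1) - x k‖ := by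
  rw [((hg _).hasGradientAt.sub (hh _).hasGradientAt).gradient, hx.gradient_succ hg k,
    norm_sub_rev (x (k + 1))]
  exact hlip _ _

theorem summable_sq_norm_gradient {μ L flow : ℝ} (hx : IsDCASequence g h x) (hμ : 0 < μ)
    (hg : Differentiable ℝ g)
    (hsc : ∀ u v : E, g v ≥ g u + ⟪gradient g u, v - u⟫ + μ * ‖v - u‖ ^ 2)
    (hh : Differentiable ℝ h) (hconv : ConvexOn ℝ Set.univ h)
    (hlip : ∀ u v : E, ‖gradient h u - gradient h v‖ ≤ L * ‖u - v‖)
    (hflow : ∀ u : E, g u - h u ≥ flow) :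
    Summable fun k => ‖gradient (fun y => g y - h y) (x k)‖ ^ 2 := by
  have hsteps : Summable fun k => ‖x (k + 1) - x k‖ ^ 2 :=
    (summable_mul_left_iff hμ.ne').1 <| summable_of_le_sub_succ (fun k => by positivity)
      (hx.mul_sq_norm_succ_sub_le hg hsc hh hconv) (fun k => hflow (x k))
  refine (summable_nat_add_iff 1).1 <|
    (hsteps.mul_left (L ^ 2)).of_nonneg_of_le (fun k => by positivity) fun k => ?_
  calc ‖gradient (fun y => g y - h y) (x (k + 1))‖ ^ 2 ≤ (L * ‖x (k + 1) - x k‖) ^ 2 :=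
        pow_le_pow_left₀ (norm_nonneg _) (hx.norm_gradient_succ_le hg hh hlip k) 2
    _ = L ^ 2 * ‖x (k + 1) - x k‖ ^ 2 := mul_pow _ _ 2

end IsDCASequence

end

/-- `o(1/k)` rate for the best iterate: `k * min_{0 ≤ i ≤ k} ‖∇f (x i)‖² → 0`;
in particular, for every `ε > 0` some iterate has gradient norm at most `ε`. -/
theorem dca_best_grad_sq_little_o
    {E : Type*} [NormedAddCommGroup E] [InnerProductSpace ℝ E] [FiniteDimensional ℝ E]
    (g h : E → ℝ) (μ L : ℝ) (hμ : 0 < μ)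
    (hg : Differentiable ℝ g)
    (hsc : ∀ x y : E, g y ≥ g x + ⟪gradient g x, y - x⟫ + μ * ‖y - x‖ ^ 2)
    (hh : Differentiable ℝ h) (hconv : ConvexOn ℝ Set.univ h)
    (hlip : ∀ x y : E, ‖gradient h x - gradient h y‖ ≤ L * ‖x - y‖)
    (flow : ℝ) (hflow : ∀ x : E, g x - h x ≥ flow)
    (x : ℕ → E)
    (hmin : ∀ k : ℕ, ∀ y : E,
      g (x (k + 1)) - ⟪gradient h (x k), x (k + 1) - x k⟫ ≤
        g y - ⟪gradient h (x k), y - x k⟫) :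
    Filter.Tendsto
      (fun k : ℕ => (k : ℝ) *
        (Finset.Icc 0 k).inf' (Finset.nonempty_Icc.2 (Nat.zero_le k))
          (fun i => ‖gradient (fun y => g y - h y) (x i)‖ ^ 2))
      Filter.atTop (nhds 0) ∧
    ∀ ε : ℝ, 0 < ε → ∃ k : ℕ, ‖gradient (fun y => g y - h y) (x k)‖ ≤ ε := by
  have hsum : Summable fun k => ‖gradient (fun y => g y - h y) (x k)‖ ^ 2 :=
    IsDCASequence.summable_sq_norm_gradient hmin hμ hg hsc hh hconv hlip hflow
  refine ⟨tendsto_mul_inf'_Icc_of_summable (fun _ => sq_nonneg _) hsum, fun ε hε => ?_⟩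
  obtain ⟨k, hk⟩ := (hsum.tendsto_atTop_zero.eventually_lt_const (pow_pos hε 2)).exists
  exact ⟨k, ((pow_lt_pow_iff_left₀ (norm_nonneg _) hε.le two_ne_zero).1 hk).le⟩
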